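/- Let Ω ⊂ ℝⁿ be a domain, 0 < s < 1, and T > 0. Suppose u : ℝⁿ × [0,∞) → ℝ is such that for each t, u(·,t) ∈ C^{1,1}_loc(Ω) ∩ 𝓛_{2s}, for each x ∈ Ω the map t ↦ u(x,t) is C¹ on [0,∞), and ∂u/∂t(x,t) + (−Δ)^s u(x,t) ≥ 0 for all (x,t) ∈ Ω × (0,∞). Assume u(x,t) ≥ 0 for all (x,t) ∈ ℝⁿ × [0,T], and suppose there exists (x₀,t₀) ∈ Ω × (0,T] with u(x₀,t₀) = 0. Then u(x,t₀) = 0 for almost every x ∈ ℝⁿ. -/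

import Mathlib

open MeasureTheory Filter Metric Topology Set

noncomputable section

/-- Euclidean space `ℝⁿ`. -/
abbrev Eucl (n : ℕ) := EuclideanSpace ℝ (Fin n)

/-- `v` is locally `C^{1,1}` on the open set `Ω`. -/
def C11loc {n : ℕ} (Ω : Set (Eucl n)) (v : Eucl n → ℝ) : Prop :=
  ∀ x ∈ Ω, ∃ r > 0, ball x r ⊆ Ω ∧ DifferentiableOn ℝ v (ball x r) ∧
    ∃ K : NNReal, LipschitzOnWith K (fderiv ℝ v) (ball x r)

/-- The tail-integrability class `𝓛_{2s}`. -/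
def L2s {n : ℕ} (s : ℝ) (v : Eucl n → ℝ) : Prop :=
  LocallyIntegrable v volume ∧
    Integrable (fun x => |v x| / (1 + ‖x‖ ^ ((n : ℝ) + 2 * s))) volume

/-- `L` is the value of the fractional Laplacian `(-Δ)^s v (x)`, defined as a
principal value:  `L = C_{n,s} P.V. ∫ (v(x) - v(y)) / |x-y|^{n+2s} dy`. -/
def IsFracLap {n : ℕ} (Cns s : ℝ) (v : Eucl n → ℝ) (x : Eucl n) (L : ℝ) : Prop :=
  Tendsto (fun ε : ℝ =>
      Cns * ∫ y in {y : Eucl n | ε < dist x y}, (v x - v y) / dist x y ^ ((n : ℝ) + 2 * s))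
    (𝓝[>] 0) (𝓝 L)

/-!
At `(x₀, t₀)` the function `u` attains its minimum `0` over `ℝⁿ × [0, t₀]`. Hence
`∂ₜu(x₀, t₀) ≤ 0`, while the principal-value integral of `u(·, t₀) ≥ 0` at a zero gives
`(-Δ)ˢu(x₀, t₀) = -C ∫ u(y, t₀) / |x₀ - y|^{n+2s} dy ≤ 0`. The supersolution inequality forces
`(-Δ)ˢu(x₀, t₀) = 0`, so the truncated integrals of the nonnegative `u(y, t₀) / |x₀ - y|^{n+2s}`
tend to `0`; being antitone in the truncation radius, they all vanish, and `u(·, t₀) = 0` a.e.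
-/

lemma deriv_nonpos_of_eventually_le_left {f : ℝ → ℝ} {t : ℝ} (hf : DifferentiableAt ℝ f t)
    (hmin : ∀ᶠ s in 𝓝[<] t, f t ≤ f s) : deriv f t ≤ 0 := by
  have hslope : Tendsto (slope f t) (𝓝[<] t) (𝓝 (deriv f t)) :=
    (hasDerivWithinAt_iff_tendsto_slope' (s := Iio t) self_notMem_Iio).1
      hf.hasDerivAt.hasDerivWithinAt
  refine le_of_tendsto hslope ?_
  filter_upwards [hmin, self_mem_nhdsWithin] with s hs hst
  rw [slope_def_field]
  exact div_nonpos_of_nonneg_of_nonpos (sub_nonneg.2 hs) (sub_nonpos.2 (le_of_lt hst))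

lemma one_add_norm_rpow_le_mul_dist_rpow {E : Type*} [SeminormedAddCommGroup E] (x : E)
    {ε p : ℝ} (hε : 0 < ε) (hp : 0 ≤ p) :
    ∃ c : ℝ, ∀ y : E, ε < dist x y → 1 + ‖y‖ ^ p ≤ c * dist x y ^ p := by
  refine ⟨(ε ^ p)⁻¹ + (‖x‖ / ε + 1) ^ p, fun y hy => ?_⟩
  have hd : 0 < dist x y := hε.trans hy
  have hone : 1 ≤ (ε ^ p)⁻¹ * dist x y ^ p := by
    rw [← div_eq_inv_mul, one_le_div (Real.rpow_pos_of_pos hε p)]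
    exact Real.rpow_le_rpow hε.le hy.le hp
  have hnorm : ‖y‖ ≤ (‖x‖ / ε + 1) * dist x y := by
    have hxy : ‖y‖ ≤ ‖x‖ + dist x y := by
      simpa [dist_zero_left] using dist_triangle (0 : E) x y
    have hx : ‖x‖ ≤ ‖x‖ / ε * dist x y := by
      rw [div_mul_eq_mul_div, le_div_iff₀ hε]
      exact mul_le_mul_of_nonneg_left hy.le (norm_nonneg x)
    linarith
  have hnorm_rpow : ‖y‖ ^ p ≤ (‖x‖ / ε + 1) ^ p * dist x y ^ p := by
    rw [← Real.mul_rpow (by positivity) hd.le]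
    exact Real.rpow_le_rpow (norm_nonneg y) hnorm hp
  rw [add_mul]
  exact add_le_add hone hnorm_rpow

section Truncation

variable {E : Type*} [MetricSpace E] [MeasurableSpace E] [OpensMeasurableSpace E]
  {μ : Measure E} {g : E → ℝ} {x : E}

lemma measurableSet_dist_gt (x : E) (ε : ℝ) : MeasurableSet {y | ε < dist x y} :=
  (isOpen_lt continuous_const (continuous_const.dist continuous_id)).measurableSet

lemma setIntegral_dist_gt_eq_zero_of_tendsto (hg : 0 ≤ g)
    (hint : ∀ ε > 0, IntegrableOn g {y | ε < dist x y} μ)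
    (hlim : Tendsto (fun ε => ∫ y in {y | ε < dist x y}, g y ∂μ) (𝓝[>] 0) (𝓝 0))
    {ε : ℝ} (hε : 0 < ε) : ∫ y in {y | ε < dist x y}, g y ∂μ = 0 := by
  refine le_antisymm (ge_of_tendsto hlim ?_) (setIntegral_nonneg (measurableSet_dist_gt x ε)
    fun y _ => hg y)
  filter_upwards [Ioo_mem_nhdsGT hε] with δ hδ
  exact setIntegral_mono_set (hint δ hδ.1) (Eventually.of_forall hg)
    (Eventually.of_forall fun y (hy : ε < dist x y) => hδ.2.trans hy)

lemma ae_eq_zero_of_tendsto_setIntegral_dist_gt (hg : 0 ≤ g)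
    (hint : ∀ ε > 0, IntegrableOn g {y | ε < dist x y} μ)
    (hlim : Tendsto (fun ε => ∫ y in {y | ε < dist x y}, g y ∂μ) (𝓝[>] 0) (𝓝 0)) :
    ∀ᵐ y ∂μ, y ≠ x → g y = 0 := by
  have hshell : ∀ k : ℕ, ∀ᵐ y ∂μ, 1 / ((k : ℝ) + 1) < dist x y → g y = 0 := by
    intro k
    have hpos : (0 : ℝ) < 1 / ((k : ℝ) + 1) := by positivity
    have hzero := (integral_eq_zero_iff_of_nonneg hg (hint _ hpos)).1
      (setIntegral_dist_gt_eq_zero_of_tendsto hg hint hlim hpos)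
    exact (ae_restrict_iff' (measurableSet_dist_gt x _)).1 hzero
  filter_upwards [ae_all_iff.2 hshell] with y hy hyx
  obtain ⟨k, hk⟩ := exists_nat_one_div_lt (dist_pos.2 hyx.symm)
  exact hy k hk

end Truncation

lemma L2s.integrableOn_div_dist_rpow {n : ℕ} {s ε : ℝ} {v : Eucl n → ℝ} (hv : L2s s v)
    (hs : 0 ≤ s) (x : Eucl n) (hε : 0 < ε) :
    IntegrableOn (fun y => v y / dist x y ^ ((n : ℝ) + 2 * s)) {y | ε < dist x y} := by
  set p : ℝ := (n : ℝ) + 2 * s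
  have hp : 0 ≤ p := by positivity
  obtain ⟨c, hc⟩ := one_add_norm_rpow_le_mul_dist_rpow x hε hp
  have hdist : Measurable fun y : Eucl n => dist x y ^ p :=
    ((continuous_const.dist continuous_id).rpow_const fun _ => Or.inr hp).measurable
  have hmeas : AEStronglyMeasurable (fun y => v y / dist x y ^ p) volume :=
    (hv.1.aestronglyMeasurable.aemeasurable.div hdist.aemeasurable).aestronglyMeasurable
  refine (hv.2.restrict.const_mul c).mono' hmeas.restrict ?_
  filter_upwards [ae_restrict_mem (measurableSet_dist_gt x ε)] with y hy
  have hdp : 0 < dist x y ^ p := Real.rpow_pos_of_pos (hε.trans hy) p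
  have hratio : 1 ≤ c * dist x y ^ p / (1 + ‖y‖ ^ p) := (one_le_div (by positivity)).2 (hc y hy)
  rw [norm_div, Real.norm_eq_abs, Real.norm_of_nonneg hdp.le, div_le_iff₀ hdp]
  calc |v y| = |v y| * 1 := (mul_one _).symm
    _ ≤ |v y| * (c * dist x y ^ p / (1 + ‖y‖ ^ p)) := by gcongr
    _ = c * (|v y| / (1 + ‖y‖ ^ p)) * dist x y ^ p := by ring

section FracLap

variable {n : ℕ} {Cns s L : ℝ} {v : Eucl n → ℝ} {x : Eucl n}

lemma IsFracLap.nonpos_of_forall_le (h : IsFracLap Cns s v x L) (hC : 0 ≤ Cns)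
    (hmin : ∀ y, v x ≤ v y) : L ≤ 0 :=
  le_of_tendsto h <| Eventually.of_forall fun _ =>
    mul_nonpos_of_nonneg_of_nonpos hC <| integral_nonpos fun y =>
      div_nonpos_of_nonpos_of_nonneg (sub_nonpos.2 (hmin y)) (Real.rpow_nonneg dist_nonneg _)

lemma IsFracLap.ae_eq_zero_of_nonneg (h : IsFracLap Cns s v x L) (hC : 0 < Cns) (hs : 0 ≤ s)
    (hv : L2s s v) (hv0 : 0 ≤ v) (hvx : v x = 0) (hL : 0 ≤ L) : v =ᵐ[volume] 0 := by
  set g : Eucl n → ℝ := fun y => v y / dist x y ^ ((n : ℝ) + 2 * s)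
  have hL0 : L = 0 := le_antisymm (h.nonpos_of_forall_le hC.le (hvx ▸ hv0)) hL
  have hlim : Tendsto (fun ε => ∫ y in {y | ε < dist x y}, g y) (𝓝[>] 0) (𝓝 0) := by
    have hneg := h.const_mul (-Cns⁻¹)
    rw [hL0, mul_zero] at hneg
    refine hneg.congr fun ε => ?_
    simp only [g, hvx, zero_sub, neg_div, integral_neg]
    field_simp
  have hg0 : 0 ≤ g := fun y => div_nonneg (hv0 y) (Real.rpow_nonneg dist_nonneg _)
  filter_upwards [ae_eq_zero_of_tendsto_setIntegral_dist_gt hg0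
    (fun ε hε => hv.integrableOn_div_dist_rpow hs x hε) hlim] with y hy
  rcases eq_or_ne y x with rfl | hyx
  · exact hvx
  · exact (div_eq_zero_iff.1 (hy hyx)).resolve_right
      (Real.rpow_pos_of_pos (dist_pos.2 hyx.symm) _).ne'

end FracLap

theorem parabolic_fracLap_strong_maximum_principle_general
    {n : ℕ} {s T Cns : ℝ} (hs : 0 < s) (hCns : 0 < Cns)
    {Ω : Set (Eucl n)}
    (u : Eucl n → ℝ → ℝ) (Lu : Eucl n → ℝ → ℝ)
    (hxreg : ∀ t : ℝ, 0 ≤ t → C11loc Ω (fun x => u x t) ∧ L2s s (fun x => u x t))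
    (htreg : ∀ x ∈ Ω, ContDiffOn ℝ 1 (u x) (Set.Ici 0))
    (hLu : ∀ x ∈ Ω, ∀ t > (0 : ℝ), IsFracLap Cns s (fun y => u y t) x (Lu x t))
    (hpde : ∀ x ∈ Ω, ∀ t > (0 : ℝ), 0 ≤ deriv (u x) t + Lu x t)
    (hnonneg : ∀ x : Eucl n, ∀ t ∈ Set.Icc (0 : ℝ) T, 0 ≤ u x t)
    {x₀ : Eucl n} {t₀ : ℝ} (hx₀ : x₀ ∈ Ω) (ht₀ : t₀ ∈ Set.Ioc (0 : ℝ) T)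
    (hvanish : u x₀ t₀ = 0) :
    ∀ᵐ x : Eucl n ∂volume, u x t₀ = 0 := by
  obtain ⟨ht₀pos, ht₀T⟩ := ht₀
  have hdiff : DifferentiableAt ℝ (u x₀) t₀ :=
    ((htreg x₀ hx₀).differentiableOn one_ne_zero).differentiableAt (Ici_mem_nhds ht₀pos)
  have hderiv : deriv (u x₀) t₀ ≤ 0 := by
    refine deriv_nonpos_of_eventually_le_left hdiff ?_
    filter_upwards [Ioo_mem_nhdsLT ht₀pos] with t ht
    exact hvanish ▸ hnonneg x₀ t ⟨ht.1.le, ht.2.le.trans ht₀T⟩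
  have hLu_nonneg : 0 ≤ Lu x₀ t₀ := by linarith [hpde x₀ hx₀ t₀ ht₀pos]
  exact (hLu x₀ hx₀ t₀ ht₀pos).ae_eq_zero_of_nonneg hCns hs.le (hxreg t₀ ht₀pos.le).2
    (fun y => hnonneg y t₀ ⟨ht₀pos.le, ht₀T⟩) hvanish hLu_nonneg

/-- strong maximum principle for the parabolic fractional Laplacian:
if a nonnegative supersolution vanishes at an interior point `(x₀, t₀)`,
then `u(·, t₀) = 0` almost everywhere. -/
theorem parabolic_fracLap_strong_maximum_principle
    {n : ℕ} {s T Cns : ℝ} (hs : 0 < s) (hs1 : s < 1) (hT : 0 < T) (hCns : 0 < Cns)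
    {Ω : Set (Eucl n)} (hΩopen : IsOpen Ω) (hΩconn : IsConnected Ω)
    (u : Eucl n → ℝ → ℝ) (Lu : Eucl n → ℝ → ℝ)
    (hxreg : ∀ t : ℝ, 0 ≤ t → C11loc Ω (fun x => u x t) ∧ L2s s (fun x => u x t))
    (htreg : ∀ x ∈ Ω, ContDiffOn ℝ 1 (u x) (Set.Ici 0))
    (hLu : ∀ x ∈ Ω, ∀ t > (0 : ℝ), IsFracLap Cns s (fun y => u y t) x (Lu x t))
    (hpde : ∀ x ∈ Ω, ∀ t > (0 : ℝ), 0 ≤ deriv (u x) t + Lu x t)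
    (hnonneg : ∀ x : Eucl n, ∀ t ∈ Set.Icc (0 : ℝ) T, 0 ≤ u x t)
    {x₀ : Eucl n} {t₀ : ℝ} (hx₀ : x₀ ∈ Ω) (ht₀ : t₀ ∈ Set.Ioc (0 : ℝ) T)
    (hvanish : u x₀ t₀ = 0) :
    ∀ᵐ x : Eucl n ∂volume, u x t₀ = 0 :=
  parabolic_fracLap_strong_maximum_principle_general hs hCns u Lu hxreg htreg hLu hpde hnonneg hx₀
    ht₀ hvanish
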